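/- Let I' be the connected component of a set of variable vertices I in the graph G \ J (the factor graph with the vertices of J removed), and let K' = V \ (I' ∪ J). If every path from I to K passes through J, then no factor of the distribution depends simultaneously on a variable in I' and a variable in K'. -/

import Mathlib

open Finset Classical
noncomputable section

/-!
The set `I'` is closed under "sharing a factor with a variable outside `J`": a `J`-avoiding walk
from `I` to `i ∈ S a` extends through the factor vertex `a` to any `k ∈ S a` with `k ∉ J`.
A variable of `K'` lies neither in `I'` nor in `J`, so it cannot share a factor with `I'`.
-/

/-- The bipartite factor graph: variable vertices `Fin N`, factor vertices `A`,
with an edge between variable `i` and factor `a` iff `i` is in the scope `S a`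
of the factor. -/
def factorGraph (N : ℕ) (A : Type*) (S : A → Finset (Fin N)) :
    SimpleGraph (Fin N ⊕ A) where
  Adj v w := (∃ i a, v = Sum.inl i ∧ w = Sum.inr a ∧ i ∈ S a) ∨
             (∃ i a, v = Sum.inr a ∧ w = Sum.inl i ∧ i ∈ S a)
  symm := by refine ⟨?_⟩; rintro v w (⟨i, a, rfl, rfl, h⟩ | ⟨i, a, rfl, rfl, h⟩)
             · exact Or.inr ⟨i, a, rfl, rfl, h⟩
             · exact Or.inl ⟨i, a, rfl, rfl, h⟩
  loopless := ⟨by rintro v (⟨i, a, rfl, h, _⟩ | ⟨i, a, rfl, h, _⟩) <;> simp at h⟩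

theorem SimpleGraph.Walk.concat_avoids {V : Type*} {G : SimpleGraph V} {X : Set V} {u v w : V}
    (p : G.Walk u v) (hp : ∀ x ∈ X, x ∉ p.support) (h : G.Adj v w) (hw : w ∉ X) :
    ∀ x ∈ X, x ∉ (p.concat h).support := by
  intro x hx
  rw [SimpleGraph.Walk.support_concat, List.mem_append, List.mem_singleton, not_or]
  exact ⟨hp x hx, fun hxw => hw (hxw ▸ hx)⟩

theorem factorGraph_adj_inl_inr {N : ℕ} {A : Type*} {S : A → Finset (Fin N)} {i : Fin N}
    {a : A} (hi : i ∈ S a) : (factorGraph N A S).Adj (Sum.inl i) (Sum.inr a) :=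
  Or.inl ⟨i, a, rfl, rfl, hi⟩

theorem factorGraph_adj_inr_inl {N : ℕ} {A : Type*} {S : A → Finset (Fin N)} {i : Fin N}
    {a : A} (hi : i ∈ S a) : (factorGraph N A S).Adj (Sum.inr a) (Sum.inl i) :=
  Or.inr ⟨i, a, rfl, rfl, hi⟩

def avoidingComponent (N : ℕ) (A : Type*) (S : A → Finset (Fin N)) (I J : Finset (Fin N)) :
    Set (Fin N) :=
  {v | ∃ i ∈ I, ∃ w : (factorGraph N A S).Walk (Sum.inl i) (Sum.inl v),
    ∀ j ∈ J, Sum.inl j ∉ w.support}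

theorem mem_avoidingComponent_of_mem_scope {N : ℕ} {A : Type*} {S : A → Finset (Fin N)}
    {I J : Finset (Fin N)} {a : A} {i k : Fin N} (hi : i ∈ avoidingComponent N A S I J)
    (hiS : i ∈ S a) (hkS : k ∈ S a) (hkJ : k ∉ J) : k ∈ avoidingComponent N A S I J := by
  obtain ⟨i₀, hi₀, w, hw⟩ := hi
  have hw' : ∀ x ∈ Sum.inl '' (J : Set (Fin N)), x ∉ w.support :=
    Set.forall_mem_image.2 hw
  have hw_a := w.concat_avoids hw' (factorGraph_adj_inl_inr hiS) (by simp)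
  have hw_k := (w.concat _).concat_avoids hw_a (factorGraph_adj_inr_inl hkS) (by simpa using hkJ)
  exact ⟨i₀, hi₀, _, fun j hj => hw_k _ ⟨j, hj, rfl⟩⟩

theorem separated_component_no_common_factor_general
    (N : ℕ) (A : Type*) (S : A → Finset (Fin N))
    (I J : Finset (Fin N))
    (I' : Set (Fin N))
    (hI' : I' = {v | ∃ i ∈ I, ∃ w : (factorGraph N A S).Walk (Sum.inl i) (Sum.inl v),
      ∀ j ∈ J, Sum.inl j ∉ w.support})
    (K' : Set (Fin N)) (hK' : K' = {v | v ∉ I' ∧ v ∉ J}) :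
    ∀ a : A, ¬ ((∃ i ∈ I', i ∈ S a) ∧ (∃ k ∈ K', k ∈ S a)) := by
  subst hI' hK'
  rintro a ⟨⟨i, hiI', hiS⟩, ⟨k, ⟨hkI', hkJ⟩, hkS⟩⟩
  exact hkI' (mem_avoidingComponent_of_mem_scope (I := I) hiI' hiS hkS hkJ)

/-- Let `I'` be the connected component of `I` in the factor graph with the
vertices of `J` removed (the variable vertices reachable from `I` by walks
avoiding `J`), and let `K' = V \ (I' ∪ J)`.  If every path from `I` to `K`
passes through `J`, then no factor's scope meets both `I'` and `K'`. -/
theorem separated_component_no_common_factor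
    (N : ℕ) (A : Type*) (S : A → Finset (Fin N))
    (I J K : Finset (Fin N))
    (hIJ : Disjoint I J) (hIK : Disjoint I K) (hJK : Disjoint J K)
    (hsep : ∀ i ∈ I, ∀ k ∈ K,
      ∀ w : (factorGraph N A S).Walk (Sum.inl i) (Sum.inl k),
        ∃ j ∈ J, Sum.inl j ∈ w.support)
    (I' : Set (Fin N))
    (hI' : I' = {v | ∃ i ∈ I, ∃ w : (factorGraph N A S).Walk (Sum.inl i) (Sum.inl v),
      ∀ j ∈ J, Sum.inl j ∉ w.support})
    (K' : Set (Fin N)) (hK' : K' = {v | v ∉ I' ∧ v ∉ J}) :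
    ∀ a : A, ¬ ((∃ i ∈ I', i ∈ S a) ∧ (∃ k ∈ K', k ∈ S a)) :=
  separated_component_no_common_factor_general N A S I J I' hI' K' hK'
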